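/- Let q, t be generic elements of a field with no multiplicative relations. For an unstoppable breaking triangle in cases (i) i_a < i_b = i_{a-1}, (ii) i_a < i_{a-1} < i_b, (iii) ordinary = i_a = i_{a-1} < i_b, evaluated at (z_a/z_{a-1}, z_b/z_a, z_b/z_{a-1}) = (q, ξ q^{-1}, ξ): the resulting rational function in ξ over ℚ(q,t) contains no factor (1 − t ξ) in numerator or denominator; while for a stoppable breaking triangle with i_a < i_b < i_{a-1} the product D^{>}(q)·D^{<}(ξq^{-1})·D^{>}(ξ) — where D^{<}(z) = (1−q^{-1}z)(1−qt^{-1}z)/((1−t^{-1}z)(1−z)) and D^{>}(z) = (1−qz)(1−q^{-1}tz)/((1−tz)(1−z)) — contains exactly one factor (1 − tξ) in its numerator. -/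

import Mathlib

set_option linter.unnecessarySimpa false
set_option linter.unreachableTactic false
set_option linter.unusedTactic false
set_option synthInstance.maxHeartbeats 400000
set_option maxHeartbeats 1000000

/-- The field `ℚ(q,t)` of rational functions in two variables. -/
abbrev F2 := FractionRing (MvPolynomial (Fin 2) ℚ)

noncomputable def qc : F2 := algebraMap (MvPolynomial (Fin 2) ℚ) F2 (MvPolynomial.X 0)
noncomputable def tc : F2 := algebraMap (MvPolynomial (Fin 2) ℚ) F2 (MvPolynomial.X 1)

/-- `ℚ(q,t)(ξ)`: rational functions in `ξ` over `ℚ(q,t)`. -/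
noncomputable abbrev K2 := RatFunc F2

noncomputable def qK : K2 := RatFunc.C qc
noncomputable def tK : K2 := RatFunc.C tc
/-- The variable `ξ`. -/
noncomputable def ξK : K2 := RatFunc.X

/-- `D^{<}(z) = (1 − q⁻¹z)(1 − qt⁻¹z)/((1 − t⁻¹z)(1 − z))`. -/
noncomputable def Dlt (z : K2) : K2 :=
  ((1 - qK⁻¹ * z) * (1 - qK * tK⁻¹ * z)) / ((1 - tK⁻¹ * z) * (1 - z))

/-- `D^{>}(z) = (1 − qz)(1 − q⁻¹tz)/((1 − tz)(1 − z))`. -/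
noncomputable def Dgt (z : K2) : K2 :=
  ((1 - qK * z) * (1 - qK⁻¹ * tK * z)) / ((1 - tK * z) * (1 - z))

/-- `D^{=,super}(z) = (1 − q⁻¹z)(1 − qz)/((1 − t⁻¹z)(1 − tz))`. -/
noncomputable def Dsup (z : K2) : K2 :=
  ((1 - qK⁻¹ * z) * (1 - qK * z)) / ((1 - tK⁻¹ * z) * (1 - tK * z))

/-- The irreducible polynomial `1 − t ξ` in `ℚ(q,t)[ξ]`. -/
noncomputable def gFac : Polynomial F2 := 1 - Polynomial.C tc * Polynomial.X

/-- The reduced fraction of `e` contains no factor `(1 − tξ)` in numerator or denominator. -/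
def NoFac (e : K2) : Prop :=
  ∃ P Q : Polynomial F2, Q ≠ 0 ∧
    e = algebraMap (Polynomial F2) K2 P / algebraMap (Polynomial F2) K2 Q ∧
    ¬ gFac ∣ P ∧ ¬ gFac ∣ Q

/-- The reduced fraction of `e` contains exactly one factor `(1 − tξ)`, in its numerator. -/
def OneFacNum (e : K2) : Prop :=
  ∃ P Q : Polynomial F2, Q ≠ 0 ∧
    e = algebraMap (Polynomial F2) K2 P / algebraMap (Polynomial F2) K2 Q ∧
    gFac ∣ P ∧ ¬ gFac * gFac ∣ P ∧ ¬ gFac ∣ Q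

namespace Stmt19Aux

lemma ne2 {p r : MvPolynomial (Fin 2) ℚ}
    (h : MvPolynomial.eval ![(2:ℚ),3] p ≠ MvPolynomial.eval ![(2:ℚ),3] r) :
    algebraMap (MvPolynomial (Fin 2) ℚ) F2 p ≠ algebraMap (MvPolynomial (Fin 2) ℚ) F2 r :=
  fun he => h (congrArg _ (IsFractionRing.injective (MvPolynomial (Fin 2) ℚ) F2 he))

lemma hq0 : qc ≠ 0 := by
  simpa [qc] using ne2 (p := .X 0) (r := 0) (by norm_num)
lemma ht0 : tc ≠ 0 := by
  simpa [tc] using ne2 (p := .X 1) (r := 0) (by norm_num)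
lemma hq1 : qc ≠ 1 := by
  simpa [qc] using ne2 (p := .X 0) (r := 1) (by norm_num)
lemma ht1 : tc ≠ 1 := by
  simpa [tc] using ne2 (p := .X 1) (r := 1) (by norm_num)
lemma hqt : qc ≠ tc := by
  simpa [qc, tc] using ne2 (p := .X 0) (r := .X 1) (by norm_num)
lemma hqt1 : qc * tc ≠ 1 := by
  simpa [qc, tc, map_mul] using ne2 (p := .X 0 * .X 1) (r := 1) (by norm_num)
lemma hq21 : qc * qc ≠ 1 := by
  simpa [qc, map_mul] using ne2 (p := .X 0 * .X 0) (r := 1) (by norm_num)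
lemma ht21 : tc * tc ≠ 1 := by
  simpa [tc, map_mul] using ne2 (p := .X 1 * .X 1) (r := 1) (by norm_num)
lemma hq2t : qc * qc ≠ tc := by
  simpa [qc, tc, map_mul] using ne2 (p := .X 0 * .X 0) (r := .X 1) (by norm_num)
lemma hqt2 : qc ≠ tc * tc := by
  simpa [qc, tc, map_mul] using ne2 (p := .X 0) (r := .X 1 * .X 1) (by norm_num)
lemma hq2t2 : qc * qc ≠ tc * tc := by
  simpa [qc, tc, map_mul] using ne2 (p := .X 0 * .X 0) (r := .X 1 * .X 1) (by norm_num)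

/-- Linear polynomial `1 - c ξ`. -/
noncomputable def L (c : F2) : Polynomial F2 := 1 - Polynomial.C c * Polynomial.X

lemma gFac_eq : gFac = L tc := rfl

lemma L_ne (c : F2) : L c ≠ 0 := fun h => by
  simpa [L] using congrArg (Polynomial.eval 0) h

lemma AL (c : F2) :algebraMap (Polynomial F2) K2 (L c) = 1 - RatFunc.C c * RatFunc.X := by
  simp [L, map_sub, map_one, map_mul, RatFunc.algebraMap_C, RatFunc.algebraMap_X]

lemma lin_ne (c : F2) : (1:K2) - RatFunc.C c * RatFunc.X ≠ 0 := by
  rw [← AL]; exact RatFunc.algebraMap_ne_zero (L_ne c)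

lemma const_lin_ne {a b : F2} (h : a * b ≠ 1) : (1:K2) - RatFunc.C a * RatFunc.C b ≠ 0 := by
  intro h0
  have h2 : RatFunc.C (a * b) = RatFunc.C (1:F2) := by
    rw [map_mul, map_one]; exact (sub_eq_zero.mp h0).symm
  exact h (RatFunc.C.injective h2)

lemma one_sub_C_ne {a : F2} (h : a ≠ 1) : (1:K2) - RatFunc.C a ≠ 0 := fun h0 =>
  h (RatFunc.C.injective (show RatFunc.C a = RatFunc.C (1:F2) by
    rw [map_one]; exact (sub_eq_zero.mp h0).symm))

lemma CK_ne {k : F2} (h : k ≠ 0) : RatFunc.C k ≠ 0 := fun h0 =>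
  h (RatFunc.C.injective (by rw [h0, map_zero]))

/-- divisibility criterion -/
lemma not_dvd_gFac {P : Polynomial F2} (h : Polynomial.eval tc⁻¹ P ≠ 0) : ¬ gFac ∣ P := by
  rintro ⟨R, rfl⟩
  apply h
  simp [gFac, mul_inv_cancel₀ ht0]

lemma evL_ne {c : F2} (h : c ≠ tc) : Polynomial.eval tc⁻¹ (L c) ≠ 0 := by
  simp only [L, Polynomial.eval_sub, Polynomial.eval_one, Polynomial.eval_mul,
    Polynomial.eval_C, Polynomial.eval_X]
  intro h0
  exact h ((mul_inv_eq_one₀ ht0).mp (sub_eq_zero.mp h0).symm)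

-- coefficient inequalities
lemma c1 : qc⁻¹ ≠ tc := by
  intro h; apply hqt1; rw [← h, mul_inv_cancel₀ hq0]
lemma c2 : qc * tc⁻¹ ≠ tc := by
  intro h; apply hqt2; field_simp [ht0] at h; linear_combination h
lemma c3 : (1:F2) ≠ tc := Ne.symm ht1
lemma c4 : qc * qc ≠ tc := hq2t
lemma c5 : qc * tc⁻¹ * qc ≠ tc := by
  intro h; apply hq2t2; field_simp [ht0] at h; linear_combination h
lemma c6 : tc⁻¹ ≠ tc := by
  intro h; apply ht21; field_simp [ht0] at h; linear_combination h.symm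
lemma c7 : tc⁻¹ * qc ≠ tc := by
  intro h; apply hqt2; field_simp [ht0] at h; linear_combination h
lemma c8 : tc * qc ≠ tc := by
  intro h; exact hq1 (mul_left_cancel₀ ht0 (h.trans (mul_one tc).symm))
lemma c9 : qc ≠ tc := hqt

noncomputable def k1 : F2 := (1 - qc * qc) * (1 - tc)
noncomputable def k2 : F2 := (1 - tc * qc) * (1 - qc)

lemma k1_ne : k1 ≠ 0 :=
  mul_ne_zero (sub_ne_zero.mpr (Ne.symm hq21)) (sub_ne_zero.mpr (Ne.symm ht1))
lemma k2_ne : k2 ≠ 0 :=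
  mul_ne_zero (sub_ne_zero.mpr fun h => hqt1 (by rw [mul_comm]; exact h.symm))
    (sub_ne_zero.mpr (Ne.symm hq1))

-- the D-factor values as quotients of polynomials
lemma h1 : Dgt qK = algebraMap (Polynomial F2) K2 (Polynomial.C k1) / algebraMap (Polynomial F2) K2 (Polynomial.C k2) := by
  have hCq : RatFunc.C qc ≠ 0 := CK_ne hq0
  have d1 := const_lin_ne (a := tc) (b := qc) (fun h => hqt1 (by rw [mul_comm]; exact h))
  have d2 := one_sub_C_ne hq1
  simp only [Dgt, qK, tK, k1, k2, map_mul, map_sub, map_one, map_inv₀,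
    RatFunc.algebraMap_C]
  field_simp

lemma h2 : Dlt ξK = algebraMap (Polynomial F2) K2 (L qc⁻¹ * L (qc * tc⁻¹)) / algebraMap (Polynomial F2) K2 (L tc⁻¹ * L 1) := by
  simp only [Dlt, qK, tK, ξK, map_mul, AL, map_inv₀, map_one, one_mul]

lemma h3 : Dsup (qK * ξK) = algebraMap (Polynomial F2) K2 (L 1 * L (qc * qc)) / algebraMap (Polynomial F2) K2 (L (tc⁻¹ * qc) * L (tc * qc)) := by
  have hCq : RatFunc.C qc ≠ 0 := CK_ne hq0
  simp only [Dsup, qK, tK, ξK, map_mul, AL, map_inv₀, map_one, one_mul,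
    inv_mul_cancel_left₀ hCq, mul_assoc]

lemma h4 : Dlt (qK * ξK) = algebraMap (Polynomial F2) K2 (L 1 * L (qc * tc⁻¹ * qc)) / algebraMap (Polynomial F2) K2 (L (tc⁻¹ * qc) * L qc) := by
  have hCq : RatFunc.C qc ≠ 0 := CK_ne hq0
  simp only [Dlt, qK, tK, ξK, map_mul, AL, map_inv₀, map_one, one_mul,
    inv_mul_cancel_left₀ hCq, mul_assoc]

lemma h5 : Dgt (qK * ξK) = algebraMap (Polynomial F2) K2 (L (qc * qc) * L (qc⁻¹ * tc * qc)) / algebraMap (Polynomial F2) K2 (L (tc * qc) * L qc) := by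
  simp only [Dgt, qK, tK, ξK, map_mul, AL, map_inv₀, map_one, one_mul, mul_assoc]

-- polynomials for the four cases
noncomputable def P1 : Polynomial F2 :=
  Polynomial.C k1 * (L qc⁻¹ * L (qc * tc⁻¹)) * (L 1 * L (qc * qc))
noncomputable def Q1 : Polynomial F2 :=
  Polynomial.C k2 * (L tc⁻¹ * L 1) * (L (tc⁻¹ * qc) * L (tc * qc))
noncomputable def P2 : Polynomial F2 :=
  Polynomial.C k1 * (L qc⁻¹ * L (qc * tc⁻¹)) * (L 1 * L (qc * tc⁻¹ * qc))
noncomputable def Q2 : Polynomial F2 :=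
  Polynomial.C k2 * (L tc⁻¹ * L 1) * (L (tc⁻¹ * qc) * L qc)
noncomputable def P3 : Polynomial F2 :=
  L qc⁻¹ * L (qc * tc⁻¹) * (L 1 * L (qc * tc⁻¹ * qc))
noncomputable def Q3 : Polynomial F2 :=
  L tc⁻¹ * L 1 * (L (tc⁻¹ * qc) * L qc)
noncomputable def P4 : Polynomial F2 :=
  Polynomial.C k1 * (L qc⁻¹ * L (qc * tc⁻¹)) * (L (qc * qc) * L (qc⁻¹ * tc * qc))
noncomputable def R4 : Polynomial F2 :=
  Polynomial.C k1 * (L qc⁻¹ * L (qc * tc⁻¹)) * L (qc * qc)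
noncomputable def Q4 : Polynomial F2 :=
  Polynomial.C k2 * (L tc⁻¹ * L 1) * (L (tc * qc) * L qc)

lemma heq4 : qc⁻¹ * tc * qc = tc := by
  rw [mul_comm qc⁻¹ tc, mul_assoc, inv_mul_cancel₀ hq0, mul_one]

lemma hP4 : P4 = L tc * R4 := by
  rw [P4, R4, heq4]; ring

lemma hQ1 : Q1 ≠ 0 := by
  rw [Q1]
  exact mul_ne_zero (mul_ne_zero (Polynomial.C_ne_zero.mpr k2_ne)
    (mul_ne_zero (L_ne _) (L_ne _))) (mul_ne_zero (L_ne _) (L_ne _))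
lemma hQ2 : Q2 ≠ 0 := by
  rw [Q2]
  exact mul_ne_zero (mul_ne_zero (Polynomial.C_ne_zero.mpr k2_ne)
    (mul_ne_zero (L_ne _) (L_ne _))) (mul_ne_zero (L_ne _) (L_ne _))
lemma hQ3 : Q3 ≠ 0 := by
  rw [Q3]
  exact mul_ne_zero (mul_ne_zero (L_ne _) (L_ne _)) (mul_ne_zero (L_ne _) (L_ne _))
lemma hQ4 : Q4 ≠ 0 := by
  rw [Q4]
  exact mul_ne_zero (mul_ne_zero (Polynomial.C_ne_zero.mpr k2_ne)
    (mul_ne_zero (L_ne _) (L_ne _))) (mul_ne_zero (L_ne _) (L_ne _))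

end Stmt19Aux

open Stmt19Aux in
/-- Breaking triangles (boxes `a−1, a` row-adjacent, `b` below `a`; the pairs
`(a−1,a), (a,b), (a−1,b)` contribute `D`-factors at arguments `q, ξ, qξ` respectively,
according to the order relations of their entries).  For the unstoppable cases
(i) `i_a < i_b = i_{a-1}` (equal super pair), (ii) `i_a < i_{a-1} < i_b`,
(iii) `ordinary = i_a = i_{a-1} < i_b`, the resulting rational function in `ξ` contains
no factor `(1 − tξ)`; for the stoppable case `i_a < i_b < i_{a-1}` the product
`D^{>}·D^{<}·D^{>}` contains exactly one factor `(1 − tξ)`, in its numerator. -/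
theorem stmt19 :
    NoFac (Dgt qK * Dlt ξK * Dsup (qK * ξK)) ∧
    NoFac (Dgt qK * Dlt ξK * Dlt (qK * ξK)) ∧
    NoFac (1 * Dlt ξK * Dlt (qK * ξK)) ∧
    OneFacNum (Dgt qK * Dlt ξK * Dgt (qK * ξK)) := by
  refine ⟨⟨P1, Q1, hQ1, ?_, ?_, ?_⟩, ⟨P2, Q2, hQ2, ?_, ?_, ?_⟩,
    ⟨P3, Q3, hQ3, ?_, ?_, ?_⟩, ⟨P4, Q4, hQ4, ?_, ?_, ?_, ?_⟩⟩
  · rw [h1, h2, h3, div_mul_div_comm, div_mul_div_comm, P1, Q1]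
    simp only [← map_mul]
  · apply not_dvd_gFac
    simp only [P1, Polynomial.eval_mul, Polynomial.eval_C]
    exact mul_ne_zero (mul_ne_zero k1_ne (mul_ne_zero (evL_ne c1) (evL_ne c2)))
      (mul_ne_zero (evL_ne c3) (evL_ne c4))
  · apply not_dvd_gFac
    simp only [Q1, Polynomial.eval_mul, Polynomial.eval_C]
    exact mul_ne_zero (mul_ne_zero k2_ne (mul_ne_zero (evL_ne c6) (evL_ne c3)))
      (mul_ne_zero (evL_ne c7) (evL_ne c8))
  · rw [h1, h2, h4, div_mul_div_comm, div_mul_div_comm, P2, Q2]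
    simp only [← map_mul]
  · apply not_dvd_gFac
    simp only [P2, Polynomial.eval_mul, Polynomial.eval_C]
    exact mul_ne_zero (mul_ne_zero k1_ne (mul_ne_zero (evL_ne c1) (evL_ne c2)))
      (mul_ne_zero (evL_ne c3) (evL_ne c5))
  · apply not_dvd_gFac
    simp only [Q2, Polynomial.eval_mul, Polynomial.eval_C]
    exact mul_ne_zero (mul_ne_zero k2_ne (mul_ne_zero (evL_ne c6) (evL_ne c3)))
      (mul_ne_zero (evL_ne c7) (evL_ne c9))
  · rw [one_mul, h2, h4, div_mul_div_comm, P3, Q3]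
    simp only [← map_mul]
  · apply not_dvd_gFac
    simp only [P3, Polynomial.eval_mul]
    exact mul_ne_zero (mul_ne_zero (evL_ne c1) (evL_ne c2))
      (mul_ne_zero (evL_ne c3) (evL_ne c5))
  · apply not_dvd_gFac
    simp only [Q3, Polynomial.eval_mul]
    exact mul_ne_zero (mul_ne_zero (evL_ne c6) (evL_ne c3))
      (mul_ne_zero (evL_ne c7) (evL_ne c9))
  · rw [h1, h2, h5, div_mul_div_comm, div_mul_div_comm, P4, Q4]
    simp only [← map_mul]
  · rw [hP4, gFac_eq]
    exact dvd_mul_right _ _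
  · rw [hP4, gFac_eq]
    intro h
    have h2 : L tc ∣ R4 := (mul_dvd_mul_iff_left (L_ne tc)).mp h
    apply not_dvd_gFac ?_ (gFac_eq ▸ h2)
    simp only [R4, Polynomial.eval_mul, Polynomial.eval_C]
    exact mul_ne_zero (mul_ne_zero k1_ne (mul_ne_zero (evL_ne c1) (evL_ne c2))) (evL_ne c4)
  · apply not_dvd_gFac
    simp only [Q4, Polynomial.eval_mul, Polynomial.eval_C]
    exact mul_ne_zero (mul_ne_zero k2_ne (mul_ne_zero (evL_ne c6) (evL_ne c3)))
      (mul_ne_zero (evL_ne c8) (evL_ne c9))
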